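/- arXiv:2508.04376 — 6 statements merged into one kernel-verified Lean document; each statement's English description precedes it below -/
import Mathlib

section
/- Let G ⊆ ℂ be a nonempty connected open set, X a complex Banach space, and f : G → X an analytic map such that the linear span of {f(λ) : λ ∈ G} is dense in X. Then for every nonempty open subset Ω ⊆ G, the linear span of {f(λ) : λ ∈ Ω} is also dense in X. -/
/-! A continuous functional `φ` that kills `f '' Ω` makes the holomorphic scalar function `φ ∘ f`
vanish on the open set `Ω`, hence on all of the connected domain `G` by the identity theorem.
So `φ` kills the dense span of `f '' G` and is zero, and by Hahn–Banach a subspace annihilated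
only by the zero functional is dense. -/

open Set

theorem ContinuousLinearMap.eq_zero_of_eqOn_zero_of_dense_span {R M N : Type*} [Semiring R]
    [TopologicalSpace M] [AddCommMonoid M] [Module R M] [TopologicalSpace N] [T2Space N]
    [AddCommMonoid N] [Module R N] {s : Set M} (hs : Dense (Submodule.span R s : Set M))
    (φ : M →L[R] N) (hφ : EqOn φ 0 s) : φ = 0 := by
  have hspan : Submodule.span R s ≤ LinearMap.ker (φ : M →ₗ[R] N) :=
    Submodule.span_le.2 fun x hx => hφ hx
  exact DFunLike.coe_injective <|
    Continuous.ext_on hs φ.continuous continuous_const fun x hx => hspan hx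

theorem dense_span_of_forall_strongDual_eqOn_zero {𝕜 V : Type*} [RCLike 𝕜]
    [NormedAddCommGroup V] [NormedSpace 𝕜 V] {s : Set V}
    (h : ∀ φ : StrongDual 𝕜 V, EqOn φ 0 s → φ = 0) : Dense (Submodule.span 𝕜 s : Set V) := by
  set q := (Submodule.span 𝕜 s).topologicalClosure
  rw [Submodule.dense_iff_topologicalClosure_eq_top, Submodule.eq_top_iff']
  have : IsClosed (q : Set V) := (Submodule.span 𝕜 s).isClosed_topologicalClosure
  by_contra! ⟨x, hx⟩
  -- Hahn–Banach in the normed quotient `V ⧸ q` separates the class of `x` from `0`.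
  have hπx : q.mkQL x ≠ 0 := by simpa [Submodule.Quotient.mk_eq_zero] using hx
  obtain ⟨g, hgx⟩ := SeparatingDual.exists_eq_one (R := 𝕜) hπx
  have hvanish : EqOn (g.comp q.mkQL) 0 s := fun y hy => by
    have hyq : y ∈ q := (Submodule.span 𝕜 s).le_topologicalClosure (Submodule.subset_span hy)
    simp [(Submodule.Quotient.mk_eq_zero q).2 hyq]
  have hgx₀ := congr($(h _ hvanish) x)
  rw [ContinuousLinearMap.comp_apply, hgx, zero_apply] at hgx₀
  exact one_ne_zero hgx₀

theorem DifferentiableOn.eqOn_zero_of_eqOn_zero_of_isOpen {Y : Type*} [NormedAddCommGroup Y]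
    [NormedSpace ℂ Y] [CompleteSpace Y] {g : ℂ → Y} {G Ω : Set ℂ} (hg : DifferentiableOn ℂ g G)
    (hG : IsOpen G) (hGconn : IsPreconnected G) (hΩ : IsOpen Ω) (hΩne : Ω.Nonempty)
    (hΩsub : Ω ⊆ G) (hzero : EqOn g 0 Ω) : EqOn g 0 G := by
  obtain ⟨z₀, hz₀⟩ := hΩne
  exact (hg.analyticOnNhd hG).eqOn_zero_of_preconnected_of_eventuallyEq_zero hGconn (hΩsub hz₀)
    (Filter.eventually_of_mem (hΩ.mem_nhds hz₀) hzero)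

theorem stmt_0_general (X : Type*) [NormedAddCommGroup X] [NormedSpace ℂ X]
    (G : Set ℂ) (hG : IsOpen G) (hGconn : IsConnected G)
    (f : ℂ → X) (hf : DifferentiableOn ℂ f G)
    (hdense : Dense (Submodule.span ℂ (f '' G) : Set X))
    (Ω : Set ℂ) (hΩ : IsOpen Ω) (hΩne : Ω.Nonempty) (hΩsub : Ω ⊆ G) :
    Dense (Submodule.span ℂ (f '' Ω) : Set X) := by
  refine dense_span_of_forall_strongDual_eqOn_zero fun φ hφ => ?_
  have hφΩ : EqOn (φ ∘ f) 0 Ω := fun z hz => hφ (mem_image_of_mem f hz)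
  have hφG : EqOn (φ ∘ f) 0 G :=
    (φ.differentiable.comp_differentiableOn hf).eqOn_zero_of_eqOn_zero_of_isOpen hG
      hGconn.isPreconnected hΩ hΩne hΩsub hφΩ
  exact φ.eq_zero_of_eqOn_zero_of_dense_span hdense (forall_mem_image.2 fun z hz => hφG hz)

/-- If `f : G → X` is analytic on a nonempty connected open set `G ⊆ ℂ`
with values in a complex Banach space `X` and the span of `f '' G` is dense, then the
span of `f '' Ω` is dense for every nonempty open `Ω ⊆ G`. -/
theorem stmt_0 (X : Type*) [NormedAddCommGroup X] [NormedSpace ℂ X] [CompleteSpace X]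
    (G : Set ℂ) (hG : IsOpen G) (hGne : G.Nonempty) (hGconn : IsConnected G)
    (f : ℂ → X) (hf : DifferentiableOn ℂ f G)
    (hdense : Dense (Submodule.span ℂ (f '' G) : Set X))
    (Ω : Set ℂ) (hΩ : IsOpen Ω) (hΩne : Ω.Nonempty) (hΩsub : Ω ⊆ G) :
    Dense (Submodule.span ℂ (f '' Ω) : Set X) :=
  stmt_0_general X G hG hGconn f hf hdense Ω hΩ hΩne hΩsub
end

section
/- Let Y be a complex Banach space and T a bounded linear operator on Y, and let T′ denote its adjoint acting on the continuous dual Y′ by (T′φ)(y) = φ(T y). For every pair of disjoint closed sets F₁, F₂ ⊆ ℂ, every element of the glocal spectral subspace 𝔛_{T′}(F₁) annihilates the glocal spectral subspace 𝔛_T(F₂): if φ ∈ 𝔛_{T′}(F₁) and y ∈ 𝔛_T(F₂), then φ(y) = 0. -/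
open Filter Topology


/-- The adjoint of `T` acting on the continuous dual: `(dualOp T φ) y = φ (T y)`. -/
noncomputable def dualOp {Y : Type*} [NormedAddCommGroup Y] [NormedSpace ℂ Y]
    (T : Y →L[ℂ] Y) : (Y →L[ℂ] ℂ) →L[ℂ] (Y →L[ℂ] ℂ) :=
  (ContinuousLinearMap.compL ℂ Y Y ℂ).flip T

/-- The glocal spectral subspace `𝔛_T(F)`: all `y` admitting an analytic solution
`g : ℂ ∖ F → Y` of `(T - z) g z = y`. -/
def glocalSubspace {Y : Type*} [NormedAddCommGroup Y] [NormedSpace ℂ Y]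
    (T : Y →L[ℂ] Y) (F : Set ℂ) : Set Y :=
  {y | ∃ g : ℂ → Y, DifferentiableOn ℂ g Fᶜ ∧ ∀ z ∈ Fᶜ, T (g z) - z • g z = y}

/-- for disjoint closed sets `F₁, F₂`, every functional in the glocal
spectral subspace of the adjoint `T′` for `F₁` annihilates the glocal spectral
subspace of `T` for `F₂`. -/
theorem stmt_1 (Y : Type*) [NormedAddCommGroup Y] [NormedSpace ℂ Y] [CompleteSpace Y]
    (T : Y →L[ℂ] Y) (F₁ F₂ : Set ℂ) (hF₁ : IsClosed F₁) (hF₂ : IsClosed F₂)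
    (hdisj : Disjoint F₁ F₂)
    (φ : Y →L[ℂ] ℂ) (hφ : φ ∈ glocalSubspace (dualOp T) F₁)
    (y : Y) (hy : y ∈ glocalSubspace T F₂) :
    φ y = 0 := by
  classical
  obtain ⟨f, hf, hfe⟩ := hφ
  obtain ⟨g, hg, hge⟩ := hy
  have hsub : F₁ ⊆ F₂ᶜ := fun z hz hz2 => Set.disjoint_left.mp hdisj hz hz2
  -- agreement on the overlap
  have agree : ∀ z, z ∈ F₁ᶜ → z ∈ F₂ᶜ → (f z) y = φ (g z) := by
    intro z hz1 hz2
    have h1 := hfe z hz1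
    have h2 := hge z hz2
    have e1 : (f z) y = (f z) (T (g z)) - z * (f z) (g z) := by
      rw [← h2]; simp [smul_eq_mul]
    have e2 : φ (g z) = (f z) (T (g z)) - z * (f z) (g z) := by
      rw [← h1]; simp [dualOp, smul_eq_mul]
    rw [e1, e2]
  set h : ℂ → ℂ := fun z => if z ∈ F₁ then φ (g z) else (f z) y with hh
  have hdiff : Differentiable ℂ h := by
    intro z
    by_cases hz : z ∈ F₁
    · have hz2 : z ∈ F₂ᶜ := hsub hz
      have hmem : F₂ᶜ ∈ 𝓝 z := hF₂.isOpen_compl.mem_nhds hz2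
      have heq : h =ᶠ[𝓝 z] fun w => φ (g w) := by
        filter_upwards [hmem] with w hw
        by_cases hw1 : w ∈ F₁
        · simp [hh, hw1]
        · simp only [hh, if_neg hw1]
          exact agree w hw1 hw
      exact (φ.differentiableAt.comp z (hg.differentiableAt hmem)).congr_of_eventuallyEq heq
    · have hmem : F₁ᶜ ∈ 𝓝 z := hF₁.isOpen_compl.mem_nhds hz
      have heq : h =ᶠ[𝓝 z] fun w => (f w) y := by
        filter_upwards [hmem] with w hw
        simp only [hh]
        rw [if_neg hw]
      exact (((hf.differentiableAt hmem)).clm_apply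
        (differentiableAt_const y)).congr_of_eventuallyEq heq
  -- norm bounds
  have hfb : ∀ z ∈ F₁ᶜ, ‖T‖ < ‖z‖ → ‖f z‖ ≤ ‖φ‖ / (‖z‖ - ‖T‖) := by
    intro z hz hlt
    have h1 := hfe z hz
    have : z • f z = dualOp T (f z) - φ := by rw [← h1]; abel
    have hb : ‖z‖ * ‖f z‖ ≤ ‖T‖ * ‖f z‖ + ‖φ‖ := by
      calc ‖z‖ * ‖f z‖ = ‖z • f z‖ := (norm_smul z (f z)).symm
        _ = ‖dualOp T (f z) - φ‖ := by rw [this]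
        _ ≤ ‖dualOp T (f z)‖ + ‖φ‖ := norm_sub_le _ _
        _ ≤ ‖f z‖ * ‖T‖ + ‖φ‖ := by
            gcongr
            exact (f z).opNorm_comp_le T
        _ = ‖T‖ * ‖f z‖ + ‖φ‖ := by ring_nf
    rw [le_div_iff₀ (by linarith)]
    nlinarith [norm_nonneg (f z)]
  have hgb : ∀ z ∈ F₂ᶜ, ‖T‖ < ‖z‖ → ‖g z‖ ≤ ‖y‖ / (‖z‖ - ‖T‖) := by
    intro z hz hlt
    have h2 := hge z hz
    have : z • g z = T (g z) - y := by rw [← h2]; abel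
    have hb : ‖z‖ * ‖g z‖ ≤ ‖T‖ * ‖g z‖ + ‖y‖ := by
      calc ‖z‖ * ‖g z‖ = ‖z • g z‖ := (norm_smul z (g z)).symm
        _ = ‖T (g z) - y‖ := by rw [this]
        _ ≤ ‖T (g z)‖ + ‖y‖ := norm_sub_le _ _
        _ ≤ ‖T‖ * ‖g z‖ + ‖y‖ := by gcongr; exact T.le_opNorm _
    rw [le_div_iff₀ (by linarith)]
    nlinarith [norm_nonneg (g z)]
  -- h tends to 0 at infinity
  have hCb : ∀ z : ℂ, ‖T‖ < ‖z‖ → ‖h z‖ ≤ ‖φ‖ * ‖y‖ / (‖z‖ - ‖T‖) := by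
    intro z hlt
    have hpos : (0:ℝ) < ‖z‖ - ‖T‖ := by linarith
    by_cases hz : z ∈ F₁
    · have : ‖h z‖ ≤ ‖φ‖ * ‖g z‖ := by
        simp only [hh, if_pos hz]; exact φ.le_opNorm _
      calc ‖h z‖ ≤ ‖φ‖ * ‖g z‖ := this
        _ ≤ ‖φ‖ * (‖y‖ / (‖z‖ - ‖T‖)) := by gcongr; exact hgb z (hsub hz) hlt
        _ = ‖φ‖ * ‖y‖ / (‖z‖ - ‖T‖) := by ring
    · have : ‖h z‖ ≤ ‖f z‖ * ‖y‖ := by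
        simp only [hh, if_neg hz]; exact (f z).le_opNorm _
      calc ‖h z‖ ≤ ‖f z‖ * ‖y‖ := this
        _ ≤ (‖φ‖ / (‖z‖ - ‖T‖)) * ‖y‖ := by gcongr; exact hfb z hz hlt
        _ = ‖φ‖ * ‖y‖ / (‖z‖ - ‖T‖) := by ring
  have hdiv : Tendsto (fun r : ℝ => ‖φ‖ * ‖y‖ / (r - ‖T‖)) atTop (𝓝 0) :=
    Tendsto.div_atTop tendsto_const_nhds (tendsto_atTop_add_const_right atTop (-‖T‖) tendsto_id)
  have htends : Tendsto h (cocompact ℂ) (𝓝 0) := by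
    rw [tendsto_zero_iff_norm_tendsto_zero]
    apply squeeze_zero' (Eventually.of_forall fun z => norm_nonneg _)
    · filter_upwards [tendsto_norm_cocompact_atTop.eventually_gt_atTop ‖T‖] with z hz
      exact hCb z hz
    · exact hdiv.comp tendsto_norm_cocompact_atTop
  have hzero : ∀ z, h z = 0 := fun z => hdiff.apply_eq_of_tendsto_cocompact z htends
  have hfzero : ∀ z ∈ F₁ᶜ, (f z) y = 0 := by
    intro z hz; have := hzero z; simpa [hh, if_neg hz] using this
  have hgzero : ∀ z ∈ F₂ᶜ, φ (g z) = 0 := by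
    intro z hz
    by_cases hz1 : z ∈ F₁
    · have := hzero z; simpa [hh, if_pos hz1] using this
    · rw [← agree z hz1 hz]; exact hfzero z hz1
  -- final estimate
  have key : ∀ r : ℝ, ‖T‖ < r → ‖φ y‖ ≤ ‖φ‖ * (‖T y‖ + ‖T‖ * ‖y‖) / (r - ‖T‖) := by
    intro r hr
    have hpos : (0:ℝ) < r - ‖T‖ := by linarith
    have hnorm : ‖(r:ℂ)‖ = r := by
      rw [Complex.norm_real, Real.norm_eq_abs, abs_of_pos (lt_of_le_of_lt (norm_nonneg T) hr)]
    have hlt : ‖T‖ < ‖(r:ℂ)‖ := by rw [hnorm]; exact hr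
    by_cases hz : (r:ℂ) ∈ F₁
    · -- use the F₂ side
      have hz2 : (r:ℂ) ∈ F₂ᶜ := hsub hz
      have h2 := hge (r:ℂ) hz2
      have : φ y = φ (T (g (r:ℂ))) := by
        rw [← h2]
        simp [smul_eq_mul, hgzero (r:ℂ) hz2]
      have hgr : ‖g (r:ℂ)‖ ≤ ‖y‖ / (r - ‖T‖) := by
        have := hgb (r:ℂ) hz2 hlt; rwa [hnorm] at this
      calc ‖φ y‖ = ‖φ (T (g (r:ℂ)))‖ := by rw [this]
        _ ≤ ‖φ‖ * (‖T‖ * ‖g (r:ℂ)‖) := le_trans (φ.le_opNorm _) (by gcongr; exact T.le_opNorm _)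
        _ ≤ ‖φ‖ * (‖T‖ * (‖y‖ / (r - ‖T‖))) := by gcongr
        _ = ‖φ‖ * (‖T‖ * ‖y‖) / (r - ‖T‖) := by ring
        _ ≤ ‖φ‖ * (‖T y‖ + ‖T‖ * ‖y‖) / (r - ‖T‖) := by
            gcongr
            nlinarith [norm_nonneg φ, norm_nonneg (T y)]
    · -- use the F₁ side
      have h1 := hfe (r:ℂ) hz
      have : φ y = (f (r:ℂ)) (T y) := by
        rw [← h1]
        simp [dualOp, smul_eq_mul, hfzero (r:ℂ) hz]
      have hfr : ‖f (r:ℂ)‖ ≤ ‖φ‖ / (r - ‖T‖) := by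
        have := hfb (r:ℂ) hz hlt; rwa [hnorm] at this
      calc ‖φ y‖ = ‖(f (r:ℂ)) (T y)‖ := by rw [this]
        _ ≤ ‖f (r:ℂ)‖ * ‖T y‖ := (f (r:ℂ)).le_opNorm _
        _ ≤ (‖φ‖ / (r - ‖T‖)) * ‖T y‖ := by gcongr
        _ = ‖φ‖ * ‖T y‖ / (r - ‖T‖) := by ring
        _ ≤ ‖φ‖ * (‖T y‖ + ‖T‖ * ‖y‖) / (r - ‖T‖) := by
            gcongr
            nlinarith [norm_nonneg φ, norm_nonneg T, norm_nonneg y]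
  have hdiv2 : Tendsto (fun r : ℝ => ‖φ‖ * (‖T y‖ + ‖T‖ * ‖y‖) / (r - ‖T‖)) atTop (𝓝 0) :=
    Tendsto.div_atTop tendsto_const_nhds (tendsto_atTop_add_const_right atTop (-‖T‖) tendsto_id)
  have : ‖φ y‖ ≤ 0 := by
    refine ge_of_tendsto hdiv2 ?_
    filter_upwards [eventually_gt_atTop ‖T‖] with r hr
    exact key r hr
  have := le_antisymm this (norm_nonneg _)
  exact norm_eq_zero.mp this
end

section
/- Under the stated hypotheses, Φ(λ) is an eigenvalue of S with eigenvector f(λ) for every λ ∈ G, and S does not have the single-valued extension property (SVEP): there exist a nonempty open set W ⊆ ℂ and an analytic function g : W → X with g(z) ≠ 0 and (S − z·I) g(z) = 0 for all z ∈ W. -/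
open Filter Topology

theorem IsOpen.exists_deriv_ne_zero_of_ne {𝕜 F : Type*} [RCLike 𝕜] [NormedAddCommGroup F]
    [NormedSpace 𝕜 F] {f : 𝕜 → F} {s : Set 𝕜} (hs : IsOpen s) (hs' : IsPreconnected s)
    (hf : DifferentiableOn 𝕜 f s) {a b : 𝕜} (ha : a ∈ s) (hb : b ∈ s) (hab : f a ≠ f b) :
    ∃ z ∈ s, deriv f z ≠ 0 := by
  by_contra! h
  exact hab (hs.is_const_of_deriv_eq_zero hs' hf (fun z hz => h z hz) ha hb)

theorem AnalyticAt.exists_analytic_rightInverse {𝕜 : Type*} [NontriviallyNormedField 𝕜]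
    [CompleteSpace 𝕜] [CharZero 𝕜] {f : 𝕜 → 𝕜} {x : 𝕜} {s : Set 𝕜}
    (hf : AnalyticAt 𝕜 f x) (hf' : deriv f x ≠ 0) (hs : s ∈ 𝓝 x) :
    ∃ r : 𝕜 → 𝕜, ∀ᶠ y in 𝓝 (f x), AnalyticAt 𝕜 r y ∧ r y ∈ s ∧ f (r y) = y := by
  set r := hf.hasStrictDerivAt.localInverse _ _ _ hf'
  have hr : AnalyticAt 𝕜 r (f x) := hf.analyticAt_localInverse hf'
  have hrx : r (f x) = x := HasStrictFDerivAt.localInverse_apply_image ..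
  have hrs : ∀ᶠ y in 𝓝 (f x), r y ∈ s := hr.continuousAt.eventually_mem (by rwa [hrx])
  have hfr : ∀ᶠ y in 𝓝 (f x), f (r y) = y := HasStrictDerivAt.eventually_right_inverse ..
  exact ⟨r, hr.eventually_analyticAt.and (hrs.and hfr)⟩

theorem stmt_2_general (X : Type*) [NormedAddCommGroup X] [NormedSpace ℂ X]
    (S : X →L[ℂ] X)
    (G : Set ℂ) (hG : IsOpen G) (hGconn : IsConnected G)
    (Φ : ℂ → ℂ) (hΦ : DifferentiableOn ℂ Φ G) (hΦnc : ∃ a ∈ G, ∃ b ∈ G, Φ a ≠ Φ b)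
    (f : ℂ → X) (hf : DifferentiableOn ℂ f G)
    (hfne : ∀ w ∈ G, f w ≠ 0) (heig : ∀ w ∈ G, S (f w) = Φ w • f w) :
    (∀ w ∈ G, f w ≠ 0 ∧ S (f w) = Φ w • f w) ∧
    ∃ W : Set ℂ, W.Nonempty ∧ IsOpen W ∧
      ∃ g : ℂ → X, DifferentiableOn ℂ g W ∧ ∀ z ∈ W, g z ≠ 0 ∧ S (g z) - z • g z = 0 := by
  refine ⟨fun w hw => ⟨hfne w hw, heig w hw⟩, ?_⟩
  obtain ⟨a, ha, b, hb, hab⟩ := hΦnc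
  obtain ⟨z₀, hz₀, hΦ'⟩ := hG.exists_deriv_ne_zero_of_ne hGconn.isPreconnected hΦ ha hb hab
  -- `g := f ∘ ψ` for a local inverse `ψ` of `Φ` is an eigenvector family for the eigenvalue `z`.
  obtain ⟨ψ, hψ⟩ :=
    (hΦ.analyticAt (hG.mem_nhds hz₀)).exists_analytic_rightInverse hΦ' (hG.mem_nhds hz₀)
  obtain ⟨W, hWψ, hWopen, hΦz₀⟩ := eventually_nhds_iff.1 hψ
  refine ⟨W, ⟨_, hΦz₀⟩, hWopen, f ∘ ψ, fun z hz => ?_, fun z hz => ?_⟩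
  · obtain ⟨hψan, hψG, -⟩ := hWψ z hz
    exact ((hf.differentiableAt (hG.mem_nhds hψG)).comp z hψan.differentiableAt)
      |>.differentiableWithinAt
  · obtain ⟨-, hψG, hΦψ⟩ := hWψ z hz
    refine ⟨hfne _ hψG, ?_⟩
    rw [Function.comp_apply, heig _ hψG, hΦψ, sub_self]

/-- if `S` has an analytic family of eigenvectors `f : G → X` with nonzero
values and non-constant analytic eigenvalue function `Φ`, then `Φ w` is an eigenvalue of
`S` with eigenvector `f w` for all `w ∈ G`, and `S` fails the single-valued extension
property: there is a nonempty open `W ⊆ ℂ` and an analytic `g : W → X` with `g z ≠ 0` and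
`(S - z) g z = 0` on `W`. -/
theorem stmt_2 (X : Type*) [NormedAddCommGroup X] [NormedSpace ℂ X] [CompleteSpace X]
    (S : X →L[ℂ] X)
    (G : Set ℂ) (hG : IsOpen G) (hGne : G.Nonempty) (hGconn : IsConnected G)
    (Φ : ℂ → ℂ) (hΦ : DifferentiableOn ℂ Φ G) (hΦnc : ∃ a ∈ G, ∃ b ∈ G, Φ a ≠ Φ b)
    (f : ℂ → X) (hf : DifferentiableOn ℂ f G)
    (hfne : ∀ w ∈ G, f w ≠ 0) (heig : ∀ w ∈ G, S (f w) = Φ w • f w) :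
    (∀ w ∈ G, f w ≠ 0 ∧ S (f w) = Φ w • f w) ∧
    ∃ W : Set ℂ, W.Nonempty ∧ IsOpen W ∧
      ∃ g : ℂ → X, DifferentiableOn ℂ g W ∧ ∀ z ∈ W, g z ≠ 0 ∧ S (g z) - z • g z = 0 :=
  stmt_2_general X S G hG hGconn Φ hΦ hΦnc f hf hfne heig
end

section
/- The Cesàro operator C on ℓ²(ℕ, ℂ) has no eigenvalues: if a ∈ ℓ² and λ ∈ ℂ satisfy C a = λ a, then a = 0. -/
/-- `C` is the Cesàro operator on `ℓ²(ℕ, ℂ)`: `(C a)ₙ = (1/(n+1)) ∑_{k=0}^{n} a_k`. -/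
def IsCesaro (C : lp (fun _ : ℕ => ℂ) 2 →L[ℂ] lp (fun _ : ℕ => ℂ) 2) : Prop :=
  ∀ (a : lp (fun _ : ℕ => ℂ) 2) (n : ℕ),
    C a n = (∑ k ∈ Finset.range (n + 1), a k) / (n + 1)

set_option maxHeartbeats 1000000 in
/-- the Cesàro operator on ℓ² has no eigenvalues. -/
theorem stmt_11 (C : lp (fun _ : ℕ => ℂ) 2 →L[ℂ] lp (fun _ : ℕ => ℂ) 2)
    (hC : IsCesaro C) (a : lp (fun _ : ℕ => ℂ) 2) (μ : ℂ) (ha : C a = μ • a) :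
    a = 0 := by
  -- basic coefficient relation
  have key : ∀ n : ℕ, ∑ k ∈ Finset.range (n + 1), a k = μ * ((n : ℂ) + 1) * a n := by
    intro n
    have h1 : C a n = μ * a n := by
      rw [ha]; simp
    have h2 := hC a n
    rw [h1] at h2
    have hne : ((n : ℂ) + 1) ≠ 0 := Nat.cast_add_one_ne_zero n
    field_simp at h2
    linear_combination -h2
  -- recurrence
  have hrec : ∀ n : ℕ, (μ * ((n : ℂ) + 2) - 1) * a (n + 1) = μ * ((n : ℂ) + 1) * a n := by
    intro n
    have h1 := key n
    have h2 := key (n + 1)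
    rw [Finset.sum_range_succ] at h2
    push_cast at h2
    linear_combination h1 - h2
  have h0 : (μ - 1) * a 0 = 0 := by
    have h := key 0
    simp at h
    linear_combination -h
  -- coefficients tend to 0
  have htend : Filter.Tendsto (fun n => ‖(a : ∀ _ : ℕ, ℂ) n‖) Filter.atTop (nhds 0) := by
    have hs : Summable fun n : ℕ => ‖(a : ∀ _ : ℕ, ℂ) n‖ ^ (2 : ℝ) := by
      have h := Memℓp.summable (p := 2) (by norm_num) (lp.memℓp a)
      simpa using h
    have h2 : Filter.Tendsto (fun n => ‖(a : ∀ _ : ℕ, ℂ) n‖ ^ (2 : ℝ)) Filter.atTop (nhds 0) :=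
      hs.tendsto_atTop_zero
    have hsq := (Real.continuous_sqrt.tendsto 0).comp h2
    have heq : ∀ n : ℕ, Real.sqrt (‖(a : ∀ _ : ℕ, ℂ) n‖ ^ 2) = ‖(a : ∀ _ : ℕ, ℂ) n‖ :=
      fun n => Real.sqrt_sq (norm_nonneg _)
    simpa [Function.comp_def, heq, Real.sqrt_zero] using hsq
  suffices hall : ∀ n, (a : ∀ _ : ℕ, ℂ) n = 0 by
    apply lp.ext
    funext n
    simpa using hall n
  by_cases hdeg : ∃ m : ℕ, μ * ((m : ℂ) + 1) = 1
  · obtain ⟨m, hm⟩ := hdeg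
    -- rewritten recurrence
    have hrec' : ∀ n : ℕ, ((n : ℂ) + 1 - m) * a (n + 1) = ((n : ℂ) + 1) * a n := by
      intro n
      linear_combination ((m : ℂ) + 1) * hrec n -
        (((n : ℂ) + 2) * a (n + 1) - ((n : ℂ) + 1) * a n) * hm
    -- below m everything vanishes
    have hlow : ∀ n, n < m → (a : ∀ _ : ℕ, ℂ) n = 0 := by
      intro n
      induction n with
      | zero =>
        intro h0m
        have hμ1 : μ - 1 ≠ 0 := by
          intro h
          have hμ : μ = 1 := by linear_combination h
          rw [hμ, one_mul] at hm
          have : (m : ℂ) = 0 := by linear_combination hm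
          have hm0 : m = 0 := by exact_mod_cast this
          omega
        exact (mul_eq_zero.mp h0).resolve_left hμ1
      | succ n ih =>
        intro hlt
        have hfn : (a : ∀ _ : ℕ, ℂ) n = 0 := ih (Nat.lt_of_succ_lt hlt)
        have h := hrec' n
        rw [hfn, mul_zero] at h
        have hne : ((n : ℂ) + 1 - m) ≠ 0 := by
          intro hz
          have h1 : ((n : ℂ) + 1) = m := by linear_combination hz
          have h2 : ((n + 1 : ℕ) : ℂ) = (m : ℕ) := by push_cast; linear_combination h1
          have : n + 1 = m := by exact_mod_cast h2
          omega
        exact (mul_eq_zero.mp h).resolve_left hne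
    -- tail monotone in absolute value
    have hge : ∀ k : ℕ, ‖(a : ∀ _ : ℕ, ℂ) m‖ ≤ ‖(a : ∀ _ : ℕ, ℂ) (m + k)‖ := by
      intro k
      induction k with
      | zero => simp
      | succ k ih =>
        have h := hrec' (m + k)
        push_cast at h
        have h' : ((k : ℂ) + 1) * a (m + k + 1) = ((m : ℂ) + k + 1) * a (m + k) := by
          linear_combination h
        have habs : ((k : ℝ) + 1) * ‖(a : ∀ _ : ℕ, ℂ) (m + k + 1)‖
            = ((m : ℝ) + k + 1) * ‖(a : ∀ _ : ℕ, ℂ) (m + k)‖ := by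
          have hc := congrArg norm h'
          rw [norm_mul, norm_mul] at hc
          have e1 : ‖(k : ℂ) + 1‖ = (k : ℝ) + 1 := by
            have h := Complex.norm_natCast (k + 1)
            push_cast at h
            simpa using h
          have e2 : ‖(m : ℂ) + k + 1‖ = (m : ℝ) + k + 1 := by
            have h := Complex.norm_natCast (m + k + 1)
            push_cast at h
            simpa using h
          rw [e1, e2] at hc
          exact hc
        have hle : ((k : ℝ) + 1) * ‖(a : ∀ _ : ℕ, ℂ) (m + k)‖
            ≤ ((k : ℝ) + 1) * ‖(a : ∀ _ : ℕ, ℂ) (m + k + 1)‖ := by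
          rw [habs]
          nlinarith [norm_nonneg ((a : ∀ _ : ℕ, ℂ) (m + k)), Nat.cast_nonneg (α := ℝ) m]
        have hstep : ‖(a : ∀ _ : ℕ, ℂ) (m + k)‖ ≤ ‖(a : ∀ _ : ℕ, ℂ) (m + k + 1)‖ :=
          le_of_mul_le_mul_left hle (by positivity)
        calc ‖(a : ∀ _ : ℕ, ℂ) m‖ ≤ ‖(a : ∀ _ : ℕ, ℂ) (m + k)‖ := ih
          _ ≤ ‖(a : ∀ _ : ℕ, ℂ) (m + (k + 1))‖ := by
              rw [show m + (k + 1) = m + k + 1 by ring]; exact hstep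
    -- hence a m = 0
    have hfm : (a : ∀ _ : ℕ, ℂ) m = 0 := by
      have ht : Filter.Tendsto (fun k => ‖(a : ∀ _ : ℕ, ℂ) (m + k)‖) Filter.atTop (nhds 0) := by
        have h := htend.comp (Filter.tendsto_add_atTop_nat m)
        simp only [Function.comp_def] at h
        simpa [Nat.add_comm] using h
      have hle0 : ‖(a : ∀ _ : ℕ, ℂ) m‖ ≤ 0 := ge_of_tendsto ht (Filter.Eventually.of_forall hge)
      simpa using le_antisymm hle0 (norm_nonneg _)
    -- everything above m vanishes
    have hhigh : ∀ k : ℕ, (a : ∀ _ : ℕ, ℂ) (m + k) = 0 := by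
      intro k
      induction k with
      | zero => simpa using hfm
      | succ k ih =>
        have h := hrec' (m + k)
        push_cast at h
        rw [ih] at h
        have h' : ((k : ℂ) + 1) * a (m + k + 1) = 0 := by linear_combination h
        have hne : ((k : ℂ) + 1) ≠ 0 := Nat.cast_add_one_ne_zero k
        have := (mul_eq_zero.mp h').resolve_left hne
        rw [show m + (k + 1) = m + k + 1 by ring]
        exact this
    intro n
    rcases lt_or_ge n m with h | h
    · exact hlow n h
    · have := hhigh (n - m)
      rwa [Nat.add_sub_cancel' h] at this
  · push_neg at hdeg
    intro n
    induction n with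
    | zero =>
      have hμ1 : μ - 1 ≠ 0 := by
        intro h
        have hμ : μ = 1 := by linear_combination h
        exact hdeg 0 (by rw [hμ]; norm_num)
      exact (mul_eq_zero.mp h0).resolve_left hμ1
    | succ n ih =>
      have h := hrec n
      rw [ih, mul_zero] at h
      have hne : μ * ((n : ℂ) + 2) - 1 ≠ 0 := by
        intro hz
        have : μ * (((n + 1 : ℕ) : ℂ) + 1) = 1 := by push_cast; linear_combination hz
        exact hdeg (n + 1) this
      exact (mul_eq_zero.mp h).resolve_left hne
end

section
/- Every λ ∈ ℂ with |λ − 1| < 1 is an eigenvalue of the Hilbert-space adjoint C* of the Cesàro operator on ℓ²(ℕ, ℂ): for each such λ there exists a nonzero b ∈ ℓ² with C* b = λ b. -/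
/-!
Pairing with the basis vectors gives `(C* b)ₙ = ∑_{k ≥ n} b_k / (k + 1)`. Put `s = μ⁻¹`, which
lies in the half-plane `re s > 1/2`, and `bₙ = ∏_{k < n} (1 - s / (k + 1))`. Then
`bₖ - bₖ₊₁ = s bₖ / (k + 1)`, so the tail sums telescope to `μ bₙ` as soon as `bₙ → 0`.
Finally `|1 - s/(k+1)|² ≤ exp (-2 re s / (k + 1) + |s|² / (k + 1)²)`, and comparing the harmonic
sum with `log (n + 1)` gives `|bₙ|² = O((n + 1) ^ (-2 re s))`, which is summable: `b ∈ ℓ²`.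
-/

open Finset Filter Topology
open scoped lp

theorem Memℓp.tendsto_norm_cofinite_zero {α : Type*} {E : α → Type*}
    [∀ i, NormedAddCommGroup (E i)] {p : ENNReal} (hp : 0 < p.toReal) {f : ∀ i, E i}
    (hf : Memℓp f p) : Tendsto (fun i => ‖f i‖) cofinite (𝓝 0) := by
  have hc : ContinuousAt (fun x : ℝ => x ^ p.toReal⁻¹) 0 :=
    Real.continuousAt_rpow_const _ _ (Or.inr (inv_nonneg.2 hp.le))
  have h := hc.tendsto.comp (hf.summable hp).tendsto_cofinite_zero
  simpa [Function.comp_def, Real.rpow_rpow_inv (norm_nonneg _) hp.ne',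
    Real.zero_rpow (inv_ne_zero hp.ne')] using h

theorem IsCesaro.apply_single {C : ℓ²(ℕ, ℂ) →L[ℂ] ℓ²(ℕ, ℂ)} (hC : IsCesaro C) (n m : ℕ) :
    C (lp.single 2 n 1) m = if n ≤ m then ((m : ℂ) + 1)⁻¹ else 0 := by
  rw [hC]
  simp only [lp.single_apply, sum_pi_single', mem_range, Nat.lt_succ_iff]
  split_ifs <;> simp

theorem IsCesaro.hasSum_adjoint_apply {C : ℓ²(ℕ, ℂ) →L[ℂ] ℓ²(ℕ, ℂ)} (hC : IsCesaro C)
    (b : ℓ²(ℕ, ℂ)) (n : ℕ) :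
    HasSum (fun k => b (k + n) / ((k + n : ℕ) + 1)) (ContinuousLinearMap.adjoint C b n) := by
  have h := lp.hasSum_inner (𝕜 := ℂ) (C (lp.single 2 n 1)) b
  rw [← ContinuousLinearMap.adjoint_inner_right, lp.inner_single_left] at h
  simp only [hC.apply_single, RCLike.inner_apply, apply_ite, map_inv₀, map_add, map_one,
    Complex.conj_natCast, map_zero, mul_zero, ← div_eq_mul_inv] at h
  rw [← (add_left_injective n).hasSum_iff] at h
  · simpa [Function.comp_def] using h
  · intro m hm
    exact if_neg fun hnm => hm ⟨m - n, Nat.sub_add_cancel hnm⟩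

noncomputable def cesaroAdjointEigenseq (s : ℂ) (n : ℕ) : ℂ :=
  ∏ k ∈ range n, (1 - s / (k + 1))

theorem cesaroAdjointEigenseq_zero (s : ℂ) : cesaroAdjointEigenseq s 0 = 1 := prod_range_zero _

theorem cesaroAdjointEigenseq_sub_succ (s : ℂ) (n : ℕ) :
    cesaroAdjointEigenseq s n - cesaroAdjointEigenseq s (n + 1) =
      s * (cesaroAdjointEigenseq s n / (n + 1)) := by
  rw [cesaroAdjointEigenseq, cesaroAdjointEigenseq, prod_range_succ]
  ring

theorem sum_range_cesaroAdjointEigenseq_div {s : ℂ} (hs : s ≠ 0) (n N : ℕ) :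
    ∑ k ∈ range N, cesaroAdjointEigenseq s (k + n) / ((k + n : ℕ) + 1) =
      s⁻¹ * (cesaroAdjointEigenseq s n - cesaroAdjointEigenseq s (N + n)) := by
  have h := sum_range_sub' (fun k => cesaroAdjointEigenseq s (k + n)) N
  simp only [add_right_comm _ 1 n, cesaroAdjointEigenseq_sub_succ, ← mul_sum, zero_add] at h
  rw [← h, inv_mul_cancel_left₀ hs]

theorem norm_one_sub_ofReal_mul_sq_le (r : ℝ) (s : ℂ) :
    ‖1 - r * s‖ ^ 2 ≤ Real.exp (-2 * r * s.re + r ^ 2 * ‖s‖ ^ 2) := by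
  have h : ‖1 - r * s‖ ^ 2 = -2 * r * s.re + r ^ 2 * ‖s‖ ^ 2 + 1 := by
    simp only [Complex.sq_norm, Complex.normSq_apply, Complex.sub_re, Complex.sub_im,
      Complex.mul_re, Complex.mul_im, Complex.ofReal_re, Complex.ofReal_im, Complex.one_re,
      Complex.one_im]
    ring
  exact h ▸ Real.add_one_le_exp _

theorem exists_norm_cesaroAdjointEigenseq_sq_le {s : ℂ} (hs : 0 ≤ s.re) :
    ∃ K : ℝ, ∀ n : ℕ, ‖cesaroAdjointEigenseq s n‖ ^ 2 ≤ K * ((n : ℝ) + 1) ^ (-2 * s.re) := by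
  have hsum : Summable fun k : ℕ => ((k : ℝ) + 1)⁻¹ ^ 2 := by
    simpa [one_div] using
      (summable_nat_add_iff 1).2 (Real.summable_one_div_nat_pow.2 one_lt_two)
  refine ⟨Real.exp (‖s‖ ^ 2 * ∑' k : ℕ, ((k : ℝ) + 1)⁻¹ ^ 2), fun n => ?_⟩
  have hfactor (k : ℕ) : (1 : ℂ) - s / (k + 1) = 1 - (((k : ℝ) + 1)⁻¹ : ℝ) * s := by
    push_cast; ring
  calc ‖cesaroAdjointEigenseq s n‖ ^ 2
      = ∏ k ∈ range n, ‖1 - (((k : ℝ) + 1)⁻¹ : ℝ) * s‖ ^ 2 := by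
        simp only [cesaroAdjointEigenseq, hfactor, norm_prod, prod_pow]
    _ ≤ ∏ k ∈ range n, Real.exp (-2 * ((k : ℝ) + 1)⁻¹ * s.re + ((k : ℝ) + 1)⁻¹ ^ 2 * ‖s‖ ^ 2) :=
        prod_le_prod (fun _ _ => by positivity) fun k _ => norm_one_sub_ofReal_mul_sq_le _ _
    _ = Real.exp (-2 * s.re * ∑ k ∈ range n, ((k : ℝ) + 1)⁻¹ +
          ‖s‖ ^ 2 * ∑ k ∈ range n, ((k : ℝ) + 1)⁻¹ ^ 2) := by
        rw [← Real.exp_sum, mul_sum, mul_sum, ← sum_add_distrib]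
        exact congrArg _ (sum_congr rfl fun k _ => by ring)
    _ ≤ Real.exp (-2 * s.re * Real.log (n + 1) + ‖s‖ ^ 2 * ∑' k : ℕ, ((k : ℝ) + 1)⁻¹ ^ 2) := by
        have hlog : Real.log (n + 1) ≤ ∑ k ∈ range n, ((k : ℝ) + 1)⁻¹ := by
          simpa [harmonic] using log_add_one_le_harmonic n
        gcongr Real.exp (?_ + ‖s‖ ^ 2 * ?_)
        · exact mul_le_mul_of_nonpos_left hlog (by linarith)
        · exact hsum.sum_le_tsum _ fun _ _ => by positivity
    _ = _ := by
        rw [Real.exp_add, Real.rpow_def_of_pos (by positivity)]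
        ring_nf

theorem memℓp_cesaroAdjointEigenseq {s : ℂ} (hs : 1 / 2 < s.re) :
    Memℓp (cesaroAdjointEigenseq s) 2 := by
  obtain ⟨K, hK⟩ := exists_norm_cesaroAdjointEigenseq_sq_le (by linarith : 0 ≤ s.re)
  have hsum : Summable fun n : ℕ => K * ((n : ℝ) + 1) ^ (-2 * s.re) := by
    refine Summable.mul_left K ?_
    simpa using
      (summable_nat_add_iff 1).2 (Real.summable_nat_rpow.2 (by linarith : -2 * s.re < -1))
  refine memℓp_gen (hsum.of_nonneg_of_le (fun _ => by positivity) fun n => ?_)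
  simpa using hK n

theorem one_half_lt_re_inv_of_norm_sub_one_lt_one {μ : ℂ} (hμ : ‖μ - 1‖ < 1) :
    1 / 2 < μ⁻¹.re := by
  have hμ0 : μ ≠ 0 := by rintro rfl; norm_num at hμ
  have hdisc : Complex.normSq μ < 2 * μ.re := by
    have h := (sq_lt_one_iff₀ (norm_nonneg _)).2 hμ
    rw [Complex.sq_norm, Complex.normSq_sub] at h
    simp only [map_one, mul_one] at h
    linarith
  rw [Complex.inv_re, lt_div_iff₀ (Complex.normSq_pos.2 hμ0)]
  linarith

/-- every `μ` with `|μ - 1| < 1` is an eigenvalue of the Hilbert-space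
adjoint `C*` of the Cesàro operator on ℓ². -/
theorem stmt_12 (C : lp (fun _ : ℕ => ℂ) 2 →L[ℂ] lp (fun _ : ℕ => ℂ) 2)
    (hC : IsCesaro C) (μ : ℂ) (hμ : ‖μ - 1‖ < 1) :
    ∃ b : lp (fun _ : ℕ => ℂ) 2, b ≠ 0 ∧ ContinuousLinearMap.adjoint C b = μ • b := by
  have hs := one_half_lt_re_inv_of_norm_sub_one_lt_one hμ
  have hμ0 : μ⁻¹ ≠ 0 := fun h => by norm_num [h] at hs
  have hmem := memℓp_cesaroAdjointEigenseq hs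
  let b : ℓ²(ℕ, ℂ) := ⟨cesaroAdjointEigenseq μ⁻¹, hmem⟩
  have hb0 : b 0 = 1 := cesaroAdjointEigenseq_zero μ⁻¹
  refine ⟨b, fun h => by simp [h] at hb0, ?_⟩
  ext n
  have htail : Tendsto (fun N => b (N + n)) atTop (𝓝 0) := by
    rw [tendsto_zero_iff_norm_tendsto_zero]
    have h := hmem.tendsto_norm_cofinite_zero (by norm_num)
    rw [Nat.cofinite_eq_atTop] at h
    exact h.comp (tendsto_add_atTop_nat n)
  refine tendsto_nhds_unique (hC.hasSum_adjoint_apply b n).tendsto_sum_nat ?_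
  simp only [b, sum_range_cesaroAdjointEigenseq_div hμ0, inv_inv]
  simpa using (tendsto_const_nhds.sub htail).const_mul μ
end

section
/- The Cesàro operator C on ℓ²(ℕ, ℂ) has Dunford's property (C): for every closed set F ⊆ ℂ, the local spectral subspace {x ∈ ℓ² : σ_C(x) ⊆ F} is a norm-closed linear subspace of ℓ². -/
/-- The local resolvent set `ρ_T(y)`: the union of all open `U ⊆ ℂ` admitting an
analytic `g : U → X` with `(T - z) g z = y` on `U`. -/
def localResolvent {X : Type*} [NormedAddCommGroup X] [NormedSpace ℂ X]
    (T : X →L[ℂ] X) (y : X) : Set ℂ :=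
  {z | ∃ U : Set ℂ, IsOpen U ∧ z ∈ U ∧
    ∃ g : ℂ → X, DifferentiableOn ℂ g U ∧ ∀ w ∈ U, T (g w) - w • g w = y}

/-- The local spectrum `σ_T(y) = ℂ ∖ ρ_T(y)`. -/
def localSpectrum {X : Type*} [NormedAddCommGroup X] [NormedSpace ℂ X]
    (T : X →L[ℂ] X) (y : X) : Set ℂ :=
  (localResolvent T y)ᶜ

/-!
For `x ≠ 0` the local spectrum `σ_C(x)` is the whole closed disc `D = closedBall 1 1`, so the
local spectral subspace of `F` is `ℓ²` when `D ⊆ F` and `{0}` otherwise.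

The inclusion `σ_C(x) ⊆ σ(C) ⊆ D` comes from `‖C - 1‖ ≤ 1`. For the converse, every `μ` in the
open disc is an eigenvalue of `C*`: with `w = μ⁻¹` (so `1 / 2 < re w`), the sequence
`c_n(w) = ∏_{i < n} (1 - w / (i + 1))` has `|c_n(w)|² ≤ e^{2|w|²} (n + 1)^{-2 re w}`, lies in `ℓ²`,
and `∑ c_n(w) ((C - μ) y)_n = 0` for all `y`. If `(C - ν) g(ν) = x` for `ν` near `μ`, then the
holomorphic function `w ↦ ∑ c_n(w) x_n` on the half-plane `1 / 2 < re w` vanishes near `μ⁻¹`,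
hence everywhere; at `w = m + 1` only `c_0, …, c_m` are nonzero, which forces `x = 0`. As
`σ_C(x)` is closed, it contains `D`.
-/

open Metric Filter Topology Finset

local notation "ℓ²" => lp (fun _ : ℕ => ℂ) 2

section LocalSpectrum

variable {X : Type*} [NormedAddCommGroup X] [NormedSpace ℂ X]

theorem isOpen_localResolvent (T : X →L[ℂ] X) (y : X) : IsOpen (localResolvent T y) := by
  rw [isOpen_iff_forall_mem_open]
  rintro z ⟨U, hU, hz, g, hg, hgy⟩
  exact ⟨U, fun w hw => ⟨U, hU, hw, g, hg, hgy⟩, hU, hz⟩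

theorem isClosed_localSpectrum (T : X →L[ℂ] X) (y : X) : IsClosed (localSpectrum T y) :=
  (isOpen_localResolvent T y).isClosed_compl

theorem localSpectrum_zero (T : X →L[ℂ] X) : localSpectrum T 0 = ∅ :=
  compl_eq_bot.2 <| Set.eq_univ_of_forall fun _ =>
    ⟨Set.univ, isOpen_univ, trivial, 0, differentiableOn_const 0, fun w _ => by simp⟩

variable [CompleteSpace X]

theorem localSpectrum_subset_spectrum (T : X →L[ℂ] X) (y : X) :
    localSpectrum T y ⊆ spectrum ℂ T := by
  refine Set.compl_subset_compl.2 fun z hz => ?_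
  refine ⟨resolventSet ℂ T, spectrum.isOpen_resolventSet T, hz, fun w => -resolvent T w y,
    fun w hw => ?_, fun w hw => ?_⟩
  · exact ((spectrum.hasDerivAt_resolvent_const_left hw).differentiableAt.clm_apply
      (differentiableAt_const y)).neg.differentiableWithinAt
  · have h := congrArg (· y) (Ring.mul_inverse_cancel _ (spectrum.mem_resolventSet_iff.1 hw))
    rw [map_neg, smul_neg, neg_sub_neg]
    simpa [resolvent, Algebra.algebraMap_eq_smul_one] using h

theorem spectrum_subset_closedBall_of_norm_sub_le {T : X →L[ℂ] X} {c : ℂ} {r : ℝ}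
    (h : ‖T - algebraMap ℂ (X →L[ℂ] X) c‖ ≤ r) : spectrum ℂ T ⊆ closedBall c r := by
  intro z hz
  have hzc : z - c ∈ spectrum ℂ (T - algebraMap ℂ (X →L[ℂ] X) c) :=
    spectrum.sub_singleton_eq T c ▸ Set.sub_mem_sub hz rfl
  have := mem_closedBall_zero_iff.1 (spectrum.subset_closedBall_norm_mul _ hzc)
  rw [mem_closedBall, dist_eq_norm]
  exact this.trans <|
    (mul_le_of_le_one_right (norm_nonneg _) ContinuousLinearMap.norm_id_le).trans h

end LocalSpectrum

theorem log_add_one_le_sum_inv (n : ℕ) : Real.log (n + 1) ≤ ∑ i ∈ range n, ((i : ℝ) + 1)⁻¹ := by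
  simpa [harmonic] using log_add_one_le_harmonic n

theorem sum_inv_sq_le_two (n : ℕ) : ∑ i ∈ range n, (((i : ℝ) + 1) ^ 2)⁻¹ ≤ 2 := by
  have := sum_Ioo_inv_sq_le (α := ℝ) 0 (n + 1)
  rw [← Finset.Ico_add_one_left_eq_Ioo, zero_add, sum_Ico_eq_sum_range] at this
  simpa [add_comm] using this

theorem summable_rpow_neg_nat_add_one {p : ℝ} (hp : 1 < p) :
    Summable fun n : ℕ => ((n : ℝ) + 1) ^ (-p) := by
  have := (summable_nat_add_iff 1).2 (Real.summable_nat_rpow_inv.2 hp)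
  refine this.congr fun n => ?_
  rw [Real.rpow_neg (by positivity)]
  push_cast
  rfl

theorem summable_mul_of_summable_norm_sq {ι R : Type*} [NormedRing R] [CompleteSpace R]
    {a b : ι → R} (ha : Summable fun i => ‖a i‖ ^ 2) (hb : Summable fun i => ‖b i‖ ^ 2) :
    Summable fun i => a i * b i := by
  refine .of_norm_bounded ((ha.add hb).div_const 2) fun i => ?_
  have := two_mul_le_add_sq ‖a i‖ ‖b i‖
  calc ‖a i * b i‖ ≤ ‖a i‖ * ‖b i‖ := norm_mul_le _ _
    _ ≤ (‖a i‖ ^ 2 + ‖b i‖ ^ 2) / 2 := by linarith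

noncomputable def cesaroMean (a : ℕ → ℂ) (n : ℕ) : ℂ := (∑ k ∈ range (n + 1), a k) / (n + 1)

theorem natCast_add_one_mul_cesaroMean (a : ℕ → ℂ) (n : ℕ) :
    ((n : ℂ) + 1) * cesaroMean a n = ∑ k ∈ range (n + 1), a k :=
  mul_div_cancel₀ _ (Nat.cast_add_one_ne_zero n)

theorem cesaroMean_zero (a : ℕ → ℂ) : cesaroMean a 0 = a 0 := by
  simp [cesaroMean]

theorem apply_succ_eq_sub_cesaroMean (a : ℕ → ℂ) (n : ℕ) :
    a (n + 1) = ((n : ℂ) + 2) * cesaroMean a (n + 1) - ((n : ℂ) + 1) * cesaroMean a n := by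
  have h := natCast_add_one_mul_cesaroMean a (n + 1)
  rw [sum_range_succ, ← natCast_add_one_mul_cesaroMean] at h
  push_cast at h
  linear_combination -h

theorem norm_sq_sub_add_le (u v : ℂ) {k : ℝ} (hk : 0 ≤ k) :
    ‖v - ((k + 1) * v - k * u)‖ ^ 2 + ((k + 1) * ‖v‖ ^ 2 - k * ‖u‖ ^ 2)
      ≤ ‖(k + 1) * v - k * u‖ ^ 2 := by
  have hdiff : ‖(k + 1) * v - k * u‖ ^ 2 - ‖v - ((k + 1) * v - k * u)‖ ^ 2
      - ((k + 1) * ‖v‖ ^ 2 - k * ‖u‖ ^ 2) = k * ‖u - v‖ ^ 2 := by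
    simp only [← Complex.normSq_eq_norm_sq, Complex.normSq_apply, Complex.sub_re, Complex.mul_re,
      Complex.add_re, Complex.ofReal_re, Complex.one_re, Complex.add_im, Complex.ofReal_im,
      Complex.one_im, add_zero, zero_mul, sub_zero, Complex.sub_im, Complex.mul_im]
    ring
  linarith [mul_nonneg hk (sq_nonneg ‖u - v‖)]

/-- The bracket telescopes when summed over `n`; the truncated `n - 1` only occurs at `n = 0`,
where it is multiplied by `0`. -/
theorem norm_sq_cesaroMean_sub_le (a : ℕ → ℂ) (n : ℕ) :
    ‖cesaroMean a n - a n‖ ^ 2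
      + ((n + 1) * ‖cesaroMean a n‖ ^ 2 - n * ‖cesaroMean a (n - 1)‖ ^ 2) ≤ ‖a n‖ ^ 2 := by
  cases n with
  | zero => simp [cesaroMean_zero]
  | succ m =>
    have h := norm_sq_sub_add_le (cesaroMean a m) (cesaroMean a (m + 1)) (k := m + 1)
      (by positivity)
    rw [apply_succ_eq_sub_cesaroMean a m]
    push_cast at h ⊢
    convert h using 4 <;> ring

theorem sum_norm_sq_cesaroMean_sub_le (a : ℕ → ℂ) (N : ℕ) :
    ∑ n ∈ range N, ‖cesaroMean a n - a n‖ ^ 2 ≤ ∑ n ∈ range N, ‖a n‖ ^ 2 := by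
  have htel := sum_range_sub (fun n : ℕ => (n : ℝ) * ‖cesaroMean a (n - 1)‖ ^ 2) N
  have hle := sum_le_sum fun n (_ : n ∈ range N) => norm_sq_cesaroMean_sub_le a n
  simp only [Nat.cast_add_one, Nat.add_sub_cancel, Nat.cast_zero, zero_mul, sub_zero] at htel
  rw [sum_add_distrib, htel] at hle
  linarith [mul_nonneg N.cast_nonneg (sq_nonneg ‖cesaroMean a (N - 1)‖)]

/-- For `1 / 2 < w.re`, `y ↦ ∑ n, cesaroCoeff w n * y n` is an eigenvector of the transpose of the
Cesàro operator, with eigenvalue `w⁻¹` (`IsCesaro.tsum_cesaroCoeff_mul_sub_smul`). -/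
noncomputable def cesaroCoeff (w : ℂ) (n : ℕ) : ℂ := ∏ i ∈ range n, (1 - w / (i + 1))

theorem cesaroCoeff_succ (w : ℂ) (n : ℕ) :
    cesaroCoeff w (n + 1) = cesaroCoeff w n * (1 - w / (n + 1)) :=
  prod_range_succ _ _

theorem norm_sq_cesaroCoeff_le {w : ℂ} (hw : 0 ≤ w.re) (n : ℕ) :
    ‖cesaroCoeff w n‖ ^ 2 ≤ Real.exp (2 * ‖w‖ ^ 2) * ((n : ℝ) + 1) ^ (-(2 * w.re)) := by
  have hfactor (i : ℕ) : ‖1 - w / (i + 1)‖ ^ 2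
      ≤ Real.exp (-2 * w.re * ((i : ℝ) + 1)⁻¹ + ‖w‖ ^ 2 * (((i : ℝ) + 1) ^ 2)⁻¹) := by
    have hi : w / (i + 1) = (((i : ℝ) + 1)⁻¹ : ℝ) * w := by push_cast; ring
    refine le_of_eq_of_le ?_ (Real.add_one_le_exp _)
    rw [hi]
    simp only [← Complex.normSq_eq_norm_sq, Complex.normSq_apply, Complex.sub_re, Complex.sub_im,
      Complex.one_re, Complex.one_im, Complex.re_ofReal_mul, Complex.im_ofReal_mul, ← inv_pow]
    ring
  calc ‖cesaroCoeff w n‖ ^ 2 = ∏ i ∈ range n, ‖1 - w / (i + 1)‖ ^ 2 := by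
        rw [cesaroCoeff, norm_prod, prod_pow]
    _ ≤ ∏ i ∈ range n,
          Real.exp (-2 * w.re * ((i : ℝ) + 1)⁻¹ + ‖w‖ ^ 2 * (((i : ℝ) + 1) ^ 2)⁻¹) :=
        prod_le_prod (fun _ _ => by positivity) fun i _ => hfactor i
    _ = Real.exp (-2 * w.re * ∑ i ∈ range n, ((i : ℝ) + 1)⁻¹
          + ‖w‖ ^ 2 * ∑ i ∈ range n, (((i : ℝ) + 1) ^ 2)⁻¹) := by
        rw [← Real.exp_sum, sum_add_distrib, mul_sum, mul_sum]
    _ ≤ Real.exp (-2 * w.re * Real.log (n + 1) + ‖w‖ ^ 2 * 2) := by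
        gcongr Real.exp (?_ + ?_)
        · nlinarith [log_add_one_le_sum_inv n]
        · exact mul_le_mul_of_nonneg_left (sum_inv_sq_le_two n) (by positivity)
    _ = Real.exp (2 * ‖w‖ ^ 2) * ((n : ℝ) + 1) ^ (-(2 * w.re)) := by
        rw [Real.rpow_def_of_pos (by positivity), ← Real.exp_add]
        ring_nf

theorem summable_norm_sq_cesaroCoeff {w : ℂ} (hw : 1 / 2 < w.re) :
    Summable fun n => ‖cesaroCoeff w n‖ ^ 2 :=
  .of_nonneg_of_le (fun _ => by positivity) (norm_sq_cesaroCoeff_le (by linarith))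
    ((summable_rpow_neg_nat_add_one (by linarith)).mul_left _)

theorem sum_cesaroCoeff_mul_cesaroMean (w : ℂ) (a : ℕ → ℂ) (N : ℕ) :
    w * ∑ n ∈ range N, cesaroCoeff w n * cesaroMean a n
      = ∑ n ∈ range N, cesaroCoeff w n * a n - cesaroCoeff w N * ∑ k ∈ range N, a k := by
  induction N with
  | zero => simp
  | succ N ih =>
    rw [sum_range_succ, mul_add, ih, cesaroCoeff_succ, cesaroMean]
    simp only [sum_range_succ]
    ring

theorem cesaroCoeff_natCast_add_one_of_lt {m n : ℕ} (hmn : m < n) :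
    cesaroCoeff ((m : ℂ) + 1) n = 0 :=
  prod_eq_zero (mem_range.2 hmn) (by rw [div_self (Nat.cast_add_one_ne_zero m), sub_self])

theorem cesaroCoeff_natCast_add_one_ne_zero {m n : ℕ} (hnm : n ≤ m) :
    cesaroCoeff ((m : ℂ) + 1) n ≠ 0 := by
  refine prod_ne_zero_iff.2 fun i hi => sub_ne_zero.2 fun h => ?_
  rw [eq_comm, div_eq_one_iff_eq (Nat.cast_add_one_ne_zero i)] at h
  have : m + 1 = i + 1 := by exact_mod_cast h
  have := mem_range.1 hi
  omega

theorem differentiable_cesaroCoeff (n : ℕ) : Differentiable ℂ fun w => cesaroCoeff w n := by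
  unfold cesaroCoeff
  fun_prop

theorem one_half_lt_re_inv_of_mem_ball {μ : ℂ} (hμ : μ ∈ ball (1 : ℂ) 1) : 1 / 2 < (μ⁻¹).re := by
  have h : Complex.normSq (μ - 1) < 1 := by
    rw [Complex.normSq_eq_norm_sq, ← dist_eq_norm]
    have := mem_ball.1 hμ
    nlinarith [dist_nonneg (x := μ) (y := 1)]
  have hμ0 : 0 < Complex.normSq μ := by
    refine Complex.normSq_pos.2 ?_
    rintro rfl
    norm_num at h
  rw [Complex.inv_re, lt_div_iff₀ hμ0]
  simp only [Complex.normSq_apply, Complex.sub_re, Complex.sub_im, Complex.one_re,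
    Complex.one_im] at h ⊢
  nlinarith

theorem lp.summable_norm_sq {α : Type*} {E : α → Type*} [∀ i, NormedAddCommGroup (E i)]
    (a : lp E 2) : Summable fun i => ‖a i‖ ^ 2 := by
  simpa using (lp.memℓp a).summable (p := 2) (by norm_num)

theorem lp.sum_norm_sq_le {α : Type*} {E : α → Type*} [∀ i, NormedAddCommGroup (E i)]
    (a : lp E 2) (s : Finset α) : ∑ i ∈ s, ‖a i‖ ^ 2 ≤ ‖a‖ ^ 2 := by
  simpa using lp.sum_rpow_le_norm_rpow (p := 2) (by norm_num) a s

theorem norm_sq_sum_range_le (a : ℓ²) (N : ℕ) : ‖∑ k ∈ range N, a k‖ ^ 2 ≤ N * ‖a‖ ^ 2 :=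
  calc ‖∑ k ∈ range N, a k‖ ^ 2 ≤ (∑ k ∈ range N, ‖a k‖) ^ 2 := by
        gcongr; exact norm_sum_le _ _
    _ ≤ N * ∑ k ∈ range N, ‖a k‖ ^ 2 := by
        simpa using sq_sum_le_card_mul_sum_sq (s := range N) (f := fun k => ‖a k‖)
    _ ≤ N * ‖a‖ ^ 2 := by gcongr; exact lp.sum_norm_sq_le a _

theorem tendsto_cesaroCoeff_mul_sum_range {w : ℂ} (hw : 1 / 2 < w.re) (a : ℓ²) :
    Tendsto (fun N => cesaroCoeff w N * ∑ k ∈ range N, a k) atTop (𝓝 0) := by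
  set K := Real.exp (2 * ‖w‖ ^ 2) * ‖a‖ ^ 2
  have hbound (N : ℕ) : ‖cesaroCoeff w N * ∑ k ∈ range N, a k‖
      ≤ √(K * ((N : ℝ) + 1) ^ (-(2 * w.re - 1))) := by
    refine Real.le_sqrt_of_sq_le ?_
    have hN : (N : ℝ) ≤ ((N : ℝ) + 1) ^ (1 : ℝ) := by simp
    calc ‖cesaroCoeff w N * ∑ k ∈ range N, a k‖ ^ 2
        = ‖cesaroCoeff w N‖ ^ 2 * ‖∑ k ∈ range N, a k‖ ^ 2 := by rw [norm_mul, mul_pow]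
      _ ≤ (Real.exp (2 * ‖w‖ ^ 2) * ((N : ℝ) + 1) ^ (-(2 * w.re))) * (N * ‖a‖ ^ 2) :=
          mul_le_mul (norm_sq_cesaroCoeff_le (by linarith) N) (norm_sq_sum_range_le a N)
            (by positivity) (by positivity)
      _ ≤ (Real.exp (2 * ‖w‖ ^ 2) * ((N : ℝ) + 1) ^ (-(2 * w.re)))
            * (((N : ℝ) + 1) ^ (1 : ℝ) * ‖a‖ ^ 2) := by
          gcongr
      _ = K * ((N : ℝ) + 1) ^ (-(2 * w.re - 1)) := by
          rw [show -(2 * w.re - 1) = -(2 * w.re) + 1 by ring, Real.rpow_add (by positivity)]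
          ring
  have hlim : Tendsto (fun N : ℕ => K * ((N : ℝ) + 1) ^ (-(2 * w.re - 1))) atTop (𝓝 0) := by
    rw [← mul_zero K]
    exact ((tendsto_rpow_neg_atTop (by linarith)).comp
      (tendsto_atTop_add_const_right _ 1 tendsto_natCast_atTop_atTop)).const_mul K
  refine squeeze_zero_norm hbound ?_
  rw [← Real.sqrt_zero]
  exact hlim.sqrt

theorem differentiableOn_tsum_cesaroCoeff_mul (x : ℓ²) :
    DifferentiableOn ℂ (fun w => ∑' n, cesaroCoeff w n * x n) {w | 1 / 2 < w.re} := by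
  intro w₀ hw₀
  obtain ⟨r, hr, hrw₀⟩ := exists_between (show 1 / 2 < w₀.re from hw₀)
  obtain ⟨R, hR⟩ := exists_gt ‖w₀‖
  set V := {w : ℂ | r < w.re ∧ ‖w‖ < R}
  have hV : IsOpen V := (isOpen_lt continuous_const Complex.continuous_re).inter
    (isOpen_lt continuous_norm continuous_const)
  have hw₀V : w₀ ∈ V := ⟨hrw₀, hR⟩
  have hbound (n : ℕ) (w : ℂ) (hw : w ∈ V) : ‖cesaroCoeff w n * x n‖
      ≤ (Real.exp (2 * R ^ 2) * ((n : ℝ) + 1) ^ (-(2 * r)) + ‖x n‖ ^ 2) / 2 := by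
    have hc : ‖cesaroCoeff w n‖ ^ 2 ≤ Real.exp (2 * R ^ 2) * ((n : ℝ) + 1) ^ (-(2 * r)) := by
      refine (norm_sq_cesaroCoeff_le (by linarith [hw.1]) n).trans ?_
      gcongr
      · exact hw.2.le
      · exact le_add_of_nonneg_left n.cast_nonneg
      · linarith [hw.1]
    have := two_mul_le_add_sq ‖cesaroCoeff w n‖ ‖x n‖
    rw [norm_mul]
    linarith
  have hdiff : DifferentiableOn ℂ (fun w => ∑' n, cesaroCoeff w n * x n) V :=
    Complex.differentiableOn_tsum_of_summable_norm
      ((((summable_rpow_neg_nat_add_one (by linarith)).mul_left _).add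
        (lp.summable_norm_sq x)).div_const 2)
      (fun n => ((differentiable_cesaroCoeff n).mul_const _).differentiableOn) hV hbound
  exact (hdiff.differentiableAt (hV.mem_nhds hw₀V)).differentiableWithinAt

theorem eq_zero_of_tsum_cesaroCoeff_mul_eq_zero (x : ℓ²)
    (hx : ∀ m : ℕ, ∑' n, cesaroCoeff ((m : ℂ) + 1) n * x n = 0) : x = 0 := by
  have hcoord (m : ℕ) : x m = 0 := by
    induction m using Nat.strong_induction_on with
    | _ m ih =>
      have hm := hx m
      rw [tsum_eq_sum (s := range (m + 1)) fun n hn =>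
        by rw [cesaroCoeff_natCast_add_one_of_lt (by simpa using hn), zero_mul],
        sum_range_succ, sum_eq_zero fun n hn => by rw [ih n (mem_range.1 hn), mul_zero],
        zero_add] at hm
      exact (mul_eq_zero.1 hm).resolve_left (cesaroCoeff_natCast_add_one_ne_zero le_rfl)
  exact lp.ext (funext hcoord)

theorem IsCesaro.coe_apply {C : ℓ² →L[ℂ] ℓ²} (hC : IsCesaro C) (a : ℓ²) :
    ⇑(C a) = cesaroMean a :=
  funext (hC a)

theorem IsCesaro.norm_sub_one_le {C : ℓ² →L[ℂ] ℓ²} (hC : IsCesaro C) : ‖C - 1‖ ≤ 1 := by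
  refine ContinuousLinearMap.opNorm_le_bound _ zero_le_one fun a => ?_
  refine lp.norm_le_of_forall_sum_le (p := 2) (by norm_num) (by positivity) fun s => ?_
  obtain ⟨N, hsN⟩ := s.exists_nat_subset_range
  simp only [ENNReal.toReal_ofNat, Real.rpow_two, one_mul]
  calc ∑ n ∈ s, ‖((C - 1) a) n‖ ^ 2 ≤ ∑ n ∈ range N, ‖((C - 1) a) n‖ ^ 2 :=
        sum_le_sum_of_subset_of_nonneg hsN fun _ _ _ => by positivity
    _ ≤ ∑ n ∈ range N, ‖a n‖ ^ 2 := by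
        simp only [sub_apply, one_apply_eq_self, lp.coeFn_sub, Pi.sub_apply, hC.coe_apply]
        exact sum_norm_sq_cesaroMean_sub_le a N
    _ ≤ ‖a‖ ^ 2 := lp.sum_norm_sq_le a _

theorem IsCesaro.tsum_cesaroCoeff_mul_sub_smul {C : ℓ² →L[ℂ] ℓ²} (hC : IsCesaro C) {w : ℂ}
    (hw : 1 / 2 < w.re) (h : ℓ²) : ∑' n, cesaroCoeff w n * (C h - w⁻¹ • h) n = 0 := by
  have hw0 : w ≠ 0 := by rintro rfl; norm_num at hw
  have hsum : Summable fun n => cesaroCoeff w n * (C h - w⁻¹ • h) n :=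
    summable_mul_of_summable_norm_sq (summable_norm_sq_cesaroCoeff hw) (lp.summable_norm_sq _)
  have hpartial (N : ℕ) : ∑ n ∈ range N, cesaroCoeff w n * (C h - w⁻¹ • h) n
      = -w⁻¹ * (cesaroCoeff w N * ∑ k ∈ range N, h k) := by
    have hM : ∑ n ∈ range N, cesaroCoeff w n * cesaroMean h n
        = w⁻¹ * (∑ n ∈ range N, cesaroCoeff w n * h n
            - cesaroCoeff w N * ∑ k ∈ range N, h k) := by
      rw [← sum_cesaroCoeff_mul_cesaroMean, inv_mul_cancel_left₀ hw0]
    simp only [lp.coeFn_sub, lp.coeFn_smul, Pi.sub_apply, Pi.smul_apply, smul_eq_mul,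
      hC.coe_apply, mul_sub, sum_sub_distrib, mul_left_comm _ w⁻¹, ← mul_sum, hM]
    ring
  refine tendsto_nhds_unique hsum.hasSum.tendsto_sum_nat ?_
  simp_rw [hpartial]
  simpa using (tendsto_cesaroCoeff_mul_sum_range hw h).const_mul (-w⁻¹)

theorem IsCesaro.spectrum_subset {C : ℓ² →L[ℂ] ℓ²} (hC : IsCesaro C) :
    spectrum ℂ C ⊆ closedBall 1 1 :=
  spectrum_subset_closedBall_of_norm_sub_le (by simpa using hC.norm_sub_one_le)

theorem IsCesaro.ball_subset_localSpectrum {C : ℓ² →L[ℂ] ℓ²} (hC : IsCesaro C) {x : ℓ²}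
    (hx : x ≠ 0) : ball (1 : ℂ) 1 ⊆ localSpectrum C x := by
  rintro μ hμ ⟨U, hU, hμU, g, -, hg⟩
  have hH : IsOpen {w : ℂ | 1 / 2 < w.re} := isOpen_lt continuous_const Complex.continuous_re
  have hμH : 1 / 2 < (μ⁻¹).re := one_half_lt_re_inv_of_mem_ball hμ
  have hμ0 : μ⁻¹ ≠ 0 := by rintro h; rw [h] at hμH; norm_num at hμH
  have hnear : (fun w => ∑' n, cesaroCoeff w n * x n) =ᶠ[𝓝 μ⁻¹] 0 := by
    have hU' : ∀ᶠ w in 𝓝 μ⁻¹, w⁻¹ ∈ U :=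
      (continuousAt_inv₀ hμ0).preimage_mem_nhds (by rw [inv_inv]; exact hU.mem_nhds hμU)
    filter_upwards [hU', hH.mem_nhds hμH] with w hwU hwH
    rw [← hg _ hwU]
    exact hC.tsum_cesaroCoeff_mul_sub_smul hwH _
  have hzero := ((differentiableOn_tsum_cesaroCoeff_mul x).analyticOnNhd hH)
    |>.eqOn_zero_of_preconnected_of_eventuallyEq_zero
      (convex_halfSpace_re_gt _).isPreconnected hμH hnear
  refine hx (eq_zero_of_tsum_cesaroCoeff_mul_eq_zero x fun m => hzero ?_)
  show 1 / 2 < ((m : ℂ) + 1).re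
  simp only [Complex.add_re, Complex.natCast_re, Complex.one_re]
  linarith [m.cast_nonneg (α := ℝ)]

theorem IsCesaro.localSpectrum_eq {C : ℓ² →L[ℂ] ℓ²} (hC : IsCesaro C) {x : ℓ²} (hx : x ≠ 0) :
    localSpectrum C x = closedBall 1 1 := by
  refine ((localSpectrum_subset_spectrum C x).trans hC.spectrum_subset).antisymm ?_
  rw [← closure_ball 1 one_ne_zero]
  exact (isClosed_localSpectrum C x).closure_subset_iff.2 (hC.ball_subset_localSpectrum hx)

theorem stmt_16_general (C : lp (fun _ : ℕ => ℂ) 2 →L[ℂ] lp (fun _ : ℕ => ℂ) 2)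
    (hC : IsCesaro C) (F : Set ℂ) :
    ∃ M : Submodule ℂ (lp (fun _ : ℕ => ℂ) 2),
      (M : Set (lp (fun _ : ℕ => ℂ) 2)) = {x | localSpectrum C x ⊆ F} ∧
      IsClosed (M : Set (lp (fun _ : ℕ => ℂ) 2)) := by
  by_cases hD : closedBall (1 : ℂ) 1 ⊆ F
  · refine ⟨⊤, ?_, isClosed_univ⟩
    ext x
    by_cases hx : x = 0 <;> simp [hx, localSpectrum_zero, hC.localSpectrum_eq, hD]
  · refine ⟨⊥, ?_, isClosed_singleton⟩
    ext x
    by_cases hx : x = 0 <;> simp [hx, localSpectrum_zero, hC.localSpectrum_eq, hD]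

/-- the Cesàro operator on ℓ² has Dunford's property (C): for every
closed `F ⊆ ℂ` the local spectral subspace `{x : σ_C(x) ⊆ F}` is a norm-closed
linear subspace of ℓ². -/
theorem stmt_16 (C : lp (fun _ : ℕ => ℂ) 2 →L[ℂ] lp (fun _ : ℕ => ℂ) 2)
    (hC : IsCesaro C) (F : Set ℂ) (hF : IsClosed F) :
    ∃ M : Submodule ℂ (lp (fun _ : ℕ => ℂ) 2),
      (M : Set (lp (fun _ : ℕ => ℂ) 2)) = {x | localSpectrum C x ⊆ F} ∧
      IsClosed (M : Set (lp (fun _ : ℕ => ℂ) 2)) :=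
  stmt_16_general C hC F
end
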